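/- For every f ∈ 𝔫_1 there exist k-linear maps f_r: V/F_r → F_r (1 ≤ r ≤ N−1) such that f = Σ_{r=1}^{N−1} ι_r ∘ f_r ∘ q_r, where q_r: V → V/F_r denotes the canonical projection and ι_r: F_r → V the inclusion. In other words, the summation map ⊕_{r=1}^{N−1} Hom_k(V/F_r, F_r) → 𝔫_1, (f_r)_r ↦ Σ_r ι_r ∘ f_r ∘ q_r, is surjective. (This is a supporting claim in the proof of Lemma 3.4.1 of the paper.) -/

import Mathlib

/-!
Choose, for every `r`, a projection `P r` of `V` onto `F r`. The differences
`P r - P (r - 1)` take values in `F r`, and since `f` lowers the filtration by one step, both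
`P r` and `P (r - 1)` fix `f (F r) ⊆ F (r - 1)`; hence `(P r - P (r - 1)) ∘ f` vanishes on `F r`
and so factors as `ι_r ∘ f_r ∘ q_r`. Summed over `1 ≤ r ≤ N - 1` these telescope to
`(P (N - 1) - P 0) ∘ f = f`, because `f V = f (F N) ⊆ F (N - 1)` and `F 0 = 0`.
-/

variable {k : Type*} [Field k] {V : Type*} [AddCommGroup V] [Module k V]

/-- `lowering F n` is the space `𝔫_n` of endomorphisms `f` with `f (F r) ⊆ F (r - n)`. -/
def lowering (F : ℤ → Submodule k V) (n : ℤ) : Submodule k (Module.End k V) where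
  carrier := {f | ∀ r : ℤ, ∀ x ∈ F r, f x ∈ F (r - n)}
  add_mem' := by
    intro f g hf hg r x hx
    simpa using (F (r - n)).add_mem (hf r x hx) (hg r x hx)
  zero_mem' := by
    intro r x hx
    simp
  smul_mem' := by
    intro c f hf r x hx
    simpa using (F (r - n)).smul_mem c (hf r x hx)

open LinearMap

theorem Int.sum_Icc_sub_sub_one {M : Type*} [AddCommGroup M] (h : ℤ → M) {a b : ℤ}
    (hab : a - 1 ≤ b) : ∑ r ∈ Finset.Icc a b, (h r - h (r - 1)) = h b - h (a - 1) := by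
  induction b, hab using Int.leInduction with
  | base => simp
  | succ b hb ih =>
    have hIcc : Finset.Icc a (b + 1) = insert (b + 1) (Finset.Icc a b) :=
      (Finset.insert_Icc_right_eq_Icc_succ (by simpa using hb)).symm
    rw [hIcc, Finset.sum_insert (by simp), ih, add_sub_cancel_right, sub_add_sub_cancel]

theorem Submodule.exists_subtype_comp_comp_mkQ_eq {R M N : Type*} [Ring R] [AddCommGroup M]
    [Module R M] [AddCommGroup N] [Module R N] {p : Submodule R M} {q : Submodule R N}
    (φ : M →ₗ[R] N) (hp : p ≤ ker φ) (hq : range φ ≤ q) :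
    ∃ g : (M ⧸ p) →ₗ[R] q, q.subtype ∘ₗ g ∘ₗ p.mkQ = φ := by
  have hφq : ∀ x, φ x ∈ q := fun x => hq (mem_range_self φ x)
  refine ⟨p.liftQ (φ.codRestrict q hφq) fun x hx => ?_, ?_⟩
  · simpa [Subtype.ext_iff] using hp hx
  · ext x
    simp

theorem Submodule.exists_isProj {K E : Type*} [DivisionRing K] [AddCommGroup E] [Module K E]
    (p : Submodule K E) : ∃ P : Module.End K E, IsProj p P := by
  obtain ⟨q, hq⟩ := p.exists_isCompl
  exact ⟨p.projection q hq, projection_apply_mem hq, fun _ => projection_apply_of_mem_left hq⟩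

section Filtration

variable {F : ℤ → Submodule k V} {P : ℤ → Module.End k V} {f : Module.End k V}

theorem le_ker_sub_comp_of_mem_lowering_one (hF : Monotone F) (hP : ∀ r, IsProj (F r) (P r))
    (hf : f ∈ lowering F 1) (r : ℤ) : F r ≤ ker ((P r - P (r - 1)) ∘ₗ f) := by
  intro x hx
  have hfx : f x ∈ F (r - 1) := hf r x hx
  simp [(hP r).map_id _ (hF (by omega) hfx), (hP (r - 1)).map_id _ hfx]

theorem range_sub_comp_le (hF : Monotone F) (hP : ∀ r, IsProj (F r) (P r)) (r : ℤ) :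
    range ((P r - P (r - 1)) ∘ₗ f) ≤ F r := by
  rintro _ ⟨x, rfl⟩
  exact (F r).sub_mem ((hP r).map_mem _) (hF (by omega) ((hP (r - 1)).map_mem _))

theorem sum_Icc_sub_comp_eq_self_of_mem_lowering_one (hP : ∀ r, IsProj (F r) (P r)) {N : ℤ}
    (hN : 1 ≤ N) (hF0 : F 0 = ⊥) (hFN : F N = ⊤) (hf : f ∈ lowering F 1) :
    ∑ r ∈ Finset.Icc 1 (N - 1), (P r - P (r - 1)) ∘ₗ f = f := by
  have hP0 : P 0 = 0 := ((hP 0).submodule_eq_bot_iff).mp hF0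
  ext x
  have hfx : f x ∈ F (N - 1) := hf N x (hFN ▸ Submodule.mem_top)
  simp only [LinearMap.sum_apply, comp_apply, LinearMap.sub_apply]
  rw [Int.sum_Icc_sub_sub_one (fun r => P r (f x)) (by omega), sub_self, hP0,
    LinearMap.zero_apply, sub_zero, (hP (N - 1)).map_id _ hfx]

end Filtration

/-- Every `f ∈ 𝔫_1` can be written as `f = ∑_{r=1}^{N−1} ι_r ∘ f_r ∘ q_r`
for some linear maps `f_r : V/F_r → F_r`, where `q_r : V → V/F_r` is the canonical projection
and `ι_r : F_r → V` the inclusion; i.e. the summation map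
`⊕_{r=1}^{N−1} Hom(V/F_r, F_r) → 𝔫_1` is surjective. -/
theorem stmt_14 (F : ℤ → Submodule k V) (hmono : Monotone F) (N : ℕ) (hN : 1 ≤ N)
    (hF0 : ∀ j : ℤ, j ≤ 0 → F j = ⊥) (hFN : ∀ j : ℤ, (N : ℤ) ≤ j → F j = ⊤)
    (f : Module.End k V) (hf : f ∈ lowering F 1) :
    ∃ g : (r : ℤ) → (V ⧸ F r) →ₗ[k] ↥(F r),
      f = ∑ r ∈ Finset.Icc (1 : ℤ) ((N : ℤ) - 1),
        (F r).subtype ∘ₗ (g r) ∘ₗ (F r).mkQ := by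
  choose P hP using fun r => (F r).exists_isProj
  choose g hg using fun r => Submodule.exists_subtype_comp_comp_mkQ_eq ((P r - P (r - 1)) ∘ₗ f)
    (le_ker_sub_comp_of_mem_lowering_one hmono hP hf r) (range_sub_comp_le hmono hP r)
  refine ⟨g, ?_⟩
  simp only [hg]
  exact (sum_Icc_sub_comp_eq_self_of_mem_lowering_one hP (by exact_mod_cast hN)
    (hF0 0 le_rfl) (hFN N le_rfl) hf).symm
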